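/- arXiv:2408.00393 — 3 statements merged into one kernel-verified Lean document; each statement's English description precedes it below -/
import Mathlib

section
/- If Q is a lean quantale, then Q is weakly lean. -/
/-!
Each summand `p i * q i` of a decomposition `⨆ i, p i * q i = 1` with vanishing cross terms
`p i * q j` is complementary to the join of the other summands: the two join to `1` and, since
`(p i * q i) * (p j * q j) = (p i * q j) * (p j * q i) = ⊥`, their product is `⊥`. Leanness
therefore makes each summand either `1` (and then `p i = q i = 1`) or `⊥`; in both cases
`p i * q i ≤ (p i ⊓ q i) * (p i ⊓ q i)`, and taking the supremum gives weak leanness.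
-/

/-- `Q` is lean. -/
def IsLeanQuantale (Q : Type*) [CompleteLattice Q] [CommMonoid Q] : Prop :=
  (∀ p q : Q, p ⊔ q = 1 → p * q = ⊥ → p = 1 ∨ q = 1) ∧
  (∀ p q : Q, p * q = 1 ↔ p = 1 ∧ q = 1)

/-- `Q` is weakly lean. -/
def IsWeaklyLeanQuantale (Q : Type*) [CompleteLattice Q] [CommMonoid Q] : Prop :=
  ∀ (I : Type) (p q : I → Q),
    (⨆ i, p i * q i) = 1 → (∀ i j, i ≠ j → p i * q j = ⊥) →
    1 ≤ ⨆ i, (p i ⊓ q i) * (p i ⊓ q i)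

theorem IsQuantale.of_mul_sSup_distrib {Q : Type*} [CommSemigroup Q] [CompleteLattice Q]
    (h : ∀ (p : Q) (s : Set Q), p * sSup s = ⨆ q ∈ s, p * q) : IsQuantale Q where
  mul_sSup_distrib := h
  sSup_mul_distrib s p := by simpa only [mul_comm] using h p s

section

variable {Q : Type*} [CommMonoid Q] [CompleteLattice Q] [IsQuantale Q]
  {I : Type*} {p q : I → Q}

open Quantale

theorem mul_mul_iSup_ne_eq_bot (hdisj : ∀ i j, i ≠ j → p i * q j = ⊥) (i : I) :
    p i * q i * ⨆ (j) (_ : j ≠ i), p j * q j = ⊥ := by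
  simp only [mul_iSup_distrib, iSup_eq_bot]
  intro j
  rcases eq_or_ne j i with rfl | hj
  · simp
  rw [iSup_pos hj, mul_mul_mul_comm, mul_comm (q i), mul_mul_mul_comm, hdisj i j hj.symm, bot_mul]

theorem IsLeanQuantale.mul_eq_one_or_eq_bot (hlean : IsLeanQuantale Q)
    (hsup : ⨆ i, p i * q i = 1) (hdisj : ∀ i j, i ≠ j → p i * q j = ⊥) (i : I) :
    p i * q i = 1 ∨ p i * q i = ⊥ := by
  have hjoin : p i * q i ⊔ ⨆ (j) (_ : j ≠ i), p j * q j = 1 := by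
    rwa [← iSup_split_single (fun j => p j * q j) i]
  have hprod := mul_mul_iSup_ne_eq_bot hdisj i
  refine (hlean.1 _ _ hjoin hprod).imp_right fun hrest => ?_
  rw [← hprod, hrest, mul_one]

theorem IsLeanQuantale.mul_le_inf_mul_inf (hlean : IsLeanQuantale Q)
    (hsup : ⨆ i, p i * q i = 1) (hdisj : ∀ i j, i ≠ j → p i * q j = ⊥) (i : I) :
    p i * q i ≤ (p i ⊓ q i) * (p i ⊓ q i) := by
  rcases hlean.mul_eq_one_or_eq_bot hsup hdisj i with hone | hbot
  · obtain ⟨hp, hq⟩ := (hlean.2 _ _).1 hone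
    rw [hp, hq, inf_idem]
  · exact hbot ▸ bot_le

end

theorem stmt6_general {Q : Type*} [CompleteLattice Q] [CommMonoid Q]
    (hdist : ∀ (p : Q) (s : Set Q), p * sSup s = ⨆ q ∈ s, p * q)
    (hlean : IsLeanQuantale Q) :
    IsWeaklyLeanQuantale Q := by
  have := IsQuantale.of_mul_sSup_distrib hdist
  intro I p q hsup hdisj
  exact hsup ▸ iSup_mono (hlean.mul_le_inf_mul_inf hsup hdisj)

/-- every lean quantale is weakly lean. -/
theorem stmt6 {Q : Type*} [CompleteLattice Q] [CommMonoid Q]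
    (hbot : (⊥ : Q) < 1)
    (hdist : ∀ (p : Q) (s : Set Q), p * sSup s = ⨆ q ∈ s, p * q)
    (hlean : IsLeanQuantale Q) :
    IsWeaklyLeanQuantale Q :=
  stmt6_general hdist hlean
end

section
/- Let ζ : X ⇸ Y be a surjective Q-map, i.e., a Q-map with ζ∘ζ* = id_Y, and for each y ∈ Y define S_y : X → Q by S_y(x) = ζ(x,y) & ζ*(y,x). Then the family (S_y)_{y∈Y} satisfies: S_y(x) & S_{y'}(x) = ⊥ for all x ∈ X whenever y ≠ y'; ⋁_{y∈Y} S_y(x) = k for all x ∈ X; ⋁_{x∈X} S_y(x) = k for all y ∈ Y; and y ≠ y' implies S_y ≠ S_{y'} (so {S_y : y ∈ Y} is a Q-partition of X). -/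
/-!
The block `S_y` collects the points that `ζ` sends to `y`, weighted by `ζ` and its adjoint `ζ*`.
The inequality `ζ ∘ ζ* ≤ id_Y` forces `ζ(x,y') & ζ*(y,x) = ⊥` for `y ≠ y'`, which makes distinct
blocks disjoint and bounds each block by `k`; `id_X ≤ ζ* ∘ ζ` makes the blocks cover every point,
and surjectivity `ζ ∘ ζ* = id_Y` gives every block total weight `k`. Disjointness and covering
give `S_y x ≤ S_y x & S_y x`, so two equal blocks with distinct indices would vanish, which a block
of weight `k > ⊥` cannot.
-/

open Classical

noncomputable section

/-- Composition of `Q`-relations: `(ψ ∘ φ)(x,z) = ⨆ y, ψ y z & φ x y`. -/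
def QR.comp {Q : Type*} [CompleteLattice Q] [Mul Q] {X Y Z : Type*}
    (ψ : Y → Z → Q) (φ : X → Y → Q) : X → Z → Q :=
  fun x z => ⨆ y, ψ y z * φ x y

/-- The identity `Q`-relation on `X`: `k` on the diagonal and `⊥` elsewhere. -/
def QR.id {Q : Type*} [CompleteLattice Q] [One Q] (X : Type*) : X → X → Q :=
  fun x y => if x = y then 1 else ⊥

/-- `ζ*(y,x) = ⨅ z, (ζ x z → id_Y y z)`, the canonical right-adjoint candidate of `ζ`
with respect to the residuation `himp`. -/
def QR.star {Q : Type*} [CompleteLattice Q] [One Q] {X Y : Type*}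
    (himp : Q → Q → Q) (ζ : X → Y → Q) : Y → X → Q :=
  fun y x => ⨅ z, himp (ζ x z) (QR.id Y y z)

/-- `ζ` is a `Q`-map: `id_X ≤ ζ* ∘ ζ` and `ζ ∘ ζ* ≤ id_Y`. -/
def QR.IsMap {Q : Type*} [CompleteLattice Q] [Mul Q] [One Q] {X Y : Type*}
    (himp : Q → Q → Q) (ζ : X → Y → Q) : Prop :=
  (∀ x x', QR.id X x x' ≤ QR.comp (QR.star himp ζ) ζ x x') ∧
  (∀ y y', QR.comp ζ (QR.star himp ζ) y y' ≤ QR.id Y y y')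

open Quantale

theorem isQuantale_of_mul_sSup {Q : Type*} [CompleteLattice Q] [CommMonoid Q]
    (hdist : ∀ (p : Q) (s : Set Q), p * sSup s = ⨆ q ∈ s, p * q) : IsQuantale Q where
  mul_sSup_distrib := hdist
  sSup_mul_distrib s y := by simpa only [mul_comm] using hdist y s

section Partition

variable {Q X Y : Type*} [CompleteLattice Q] [CommMonoid Q] [IsQuantale Q] {S : Y → X → Q}

theorem le_mul_self_of_disjoint_of_cover (hdisj : ∀ x y y', y ≠ y' → S y x * S y' x = ⊥)
    (hcover : ∀ x, ⨆ y, S y x = 1) (y : Y) (x : X) : S y x ≤ S y x * S y x :=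
  calc S y x = S y x * ⨆ y', S y' x := by rw [hcover, mul_one]
    _ = ⨆ y', S y x * S y' x := mul_iSup_distrib
    _ ≤ S y x * S y x := iSup_le fun y' => by
        rcases eq_or_ne y y' with rfl | hne
        · rfl
        · rw [hdisj x y y' hne]
          exact bot_le

theorem injective_of_disjoint_of_cover (hdisj : ∀ x y y', y ≠ y' → S y x * S y' x = ⊥)
    (hcover : ∀ x, ⨆ y, S y x = 1) (hne_bot : ∀ y, S y ≠ ⊥) : Function.Injective S := by
  intro y y' heq
  by_contra hne
  refine hne_bot y (funext fun x => le_bot_iff.1 ?_)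
  calc S y x ≤ S y x * S y x := le_mul_self_of_disjoint_of_cover hdisj hcover y x
    _ = S y x * S y' x := by rw [heq]
    _ = ⊥ := hdisj x y y' hne

end Partition

namespace QR

section Map

variable {Q X Y : Type*} [CompleteLattice Q] [Mul Q] [One Q] {himp : Q → Q → Q}
  {ζ : X → Y → Q}

theorem IsMap.mul_star_le_id (hζ : IsMap himp ζ) (x : X) (y y' : Y) :
    ζ x y' * star himp ζ y x ≤ QR.id Y y y' :=
  (le_iSup (fun x => ζ x y' * star himp ζ y x) x).trans (hζ.2 y y')

theorem IsMap.mul_star_le_one (hζ : IsMap himp ζ) (x : X) (y : Y) :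
    ζ x y * star himp ζ y x ≤ 1 := by
  simpa [QR.id] using hζ.mul_star_le_id x y y

theorem IsMap.mul_star_eq_bot (hζ : IsMap himp ζ) {y y' : Y} (hne : y ≠ y') (x : X) :
    ζ x y' * star himp ζ y x = ⊥ :=
  le_bot_iff.1 <| by simpa [QR.id, hne] using hζ.mul_star_le_id x y y'

end Map

section CommMap

variable {Q X Y : Type*} [CompleteLattice Q] [CommMonoid Q] {himp : Q → Q → Q}
  {ζ : X → Y → Q}

theorem IsMap.iSup_mul_star_eq_one (hζ : IsMap himp ζ) (x : X) :
    ⨆ y, ζ x y * star himp ζ y x = 1 := by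
  refine le_antisymm (iSup_le fun y => hζ.mul_star_le_one x y) ?_
  simpa [QR.id, QR.comp, mul_comm] using hζ.1 x x

theorem IsMap.mul_star_mul_mul_star_eq_bot [IsQuantale Q] (hζ : IsMap himp ζ) {y y' : Y}
    (hne : y ≠ y') (x : X) :
    ζ x y * star himp ζ y x * (ζ x y' * star himp ζ y' x) = ⊥ :=
  calc ζ x y * star himp ζ y x * (ζ x y' * star himp ζ y' x)
      = ζ x y * star himp ζ y' x * (ζ x y' * star himp ζ y x) := by ac_rfl
    _ = ⊥ := by rw [hζ.mul_star_eq_bot hne, mul_bot]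

end CommMap

end QR

theorem stmt12_general {Q : Type*} [CompleteLattice Q] [CommMonoid Q]
    (hbot : (⊥ : Q) < 1)
    (hdist : ∀ (p : Q) (s : Set Q), p * sSup s = ⨆ q ∈ s, p * q)
    (himp : Q → Q → Q)
    {X Y : Type*} (ζ : X → Y → Q)
    (hζ : QR.IsMap himp ζ)
    (hsur : QR.comp ζ (QR.star himp ζ) = QR.id Y)
    (S : Y → X → Q) (hS : ∀ y x, S y x = ζ x y * QR.star himp ζ y x) :
    (∀ (x : X) (y y' : Y), y ≠ y' → S y x * S y' x = ⊥) ∧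
    (∀ x : X, (⨆ y, S y x) = 1) ∧
    (∀ y : Y, (⨆ x, S y x) = 1) ∧
    (∀ y y' : Y, y ≠ y' → S y ≠ S y') := by
  have := isQuantale_of_mul_sSup hdist
  have hdisj : ∀ (x : X) (y y' : Y), y ≠ y' → S y x * S y' x = ⊥ := fun x y y' hne => by
    rw [hS, hS]
    exact hζ.mul_star_mul_mul_star_eq_bot hne x
  have hcover : ∀ x : X, (⨆ y, S y x) = 1 := fun x => by
    simpa only [hS] using hζ.iSup_mul_star_eq_one x
  have htotal : ∀ y : Y, (⨆ x, S y x) = 1 := fun y => by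
    simpa [hS, QR.comp, QR.id] using congrFun₂ hsur y y
  have hne_bot : ∀ y, S y ≠ ⊥ := fun y hy =>
    hbot.ne (by simpa [hy] using htotal y)
  exact ⟨hdisj, hcover, htotal, fun _ _ => (injective_of_disjoint_of_cover hdisj hcover hne_bot).ne⟩

/-- a surjective `Q`-map `ζ : X ⇸ Y` induces a `Q`-partition
`{S_y : y ∈ Y}` of `X`, where `S_y x = ζ(x,y) & ζ*(y,x)`, and `y ≠ y' → S_y ≠ S_{y'}`. -/
theorem stmt12 {Q : Type*} [CompleteLattice Q] [CommMonoid Q]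
    (hbot : (⊥ : Q) < 1)
    (hdist : ∀ (p : Q) (s : Set Q), p * sSup s = ⨆ q ∈ s, p * q)
    (himp : Q → Q → Q)
    (hres : ∀ p q r : Q, p * q ≤ r ↔ p ≤ himp q r)
    {X Y : Type*} (ζ : X → Y → Q)
    (hζ : QR.IsMap himp ζ)
    (hsur : QR.comp ζ (QR.star himp ζ) = QR.id Y)
    (S : Y → X → Q) (hS : ∀ y x, S y x = ζ x y * QR.star himp ζ y x) :
    (∀ (x : X) (y y' : Y), y ≠ y' → S y x * S y' x = ⊥) ∧
    (∀ x : X, (⨆ y, S y x) = 1) ∧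
    (∀ y : Y, (⨆ x, S y x) = 1) ∧
    (∀ y y' : Y, y ≠ y' → S y ≠ S y') :=
  stmt12_general hbot hdist himp ζ hζ hsur S hS
end
end

section
/- Let Σ be a Q-partition of a set X. Then the Q-relation ζ_Σ : X ⇸ Σ defined by ζ_Σ(x,S) = Sx is a surjective Q-map; in fact ζ_Σ ⊣ ζ_Σ^op (i.e., id_X ≤ ζ_Σ^op ∘ ζ_Σ and ζ_Σ ∘ ζ_Σ^op ≤ id_Σ) and ζ_Σ ∘ ζ_Σ^op = id_Σ, where ζ_Σ^op(S,x) = ζ_Σ(x,S). -/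
open Classical

noncomputable section

/-! Residuation makes `· * q` a left adjoint, so multiplication is monotone and distributes over
arbitrary joins. With the partition axioms this gives `S x & S x = S x & ⋁_T T x = S x`, from
which `ζ ∘ ζ^op = id` and `id ≤ ζ^op ∘ ζ` follow by direct computation. Finally `ζ*` is the
largest `ψ` with `ζ ∘ ψ ≤ id`, so `ζ^op ≤ ζ*`, and the `Q`-map inequalities for `ζ*` follow
from those for `ζ^op` by monotonicity of composition. -/

namespace QR

variable {Q : Type*} [CompleteLattice Q] [CommMonoid Q] {himp : Q → Q → Q}

theorem gc_mul_himp (hres : ∀ p q r : Q, p * q ≤ r ↔ p ≤ himp q r) (q : Q) :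
    GaloisConnection (· * q) (himp q) :=
  fun p r => hres p q r

theorem mul_le_mul_of_residuated (hres : ∀ p q r : Q, p * q ≤ r ↔ p ≤ himp q r)
    {a b c d : Q} (hab : a ≤ b) (hcd : c ≤ d) : a * c ≤ b * d :=
  calc a * c ≤ b * c := (gc_mul_himp hres c).monotone_l hab
    _ = c * b := mul_comm b c
    _ ≤ d * b := (gc_mul_himp hres b).monotone_l hcd
    _ = b * d := mul_comm d b

theorem mul_iSup_of_residuated (hres : ∀ p q r : Q, p * q ≤ r ↔ p ≤ himp q r)
    {ι : Type*} (p : Q) (f : ι → Q) : p * ⨆ i, f i = ⨆ i, p * f i := by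
  simp only [mul_comm p]
  exact (gc_mul_himp hres p).l_iSup

theorem comp_mono (hres : ∀ p q r : Q, p * q ≤ r ↔ p ≤ himp q r) {X Y Z : Type*}
    {ψ ψ' : Y → Z → Q} {φ φ' : X → Y → Q} (hψ : ψ ≤ ψ') (hφ : φ ≤ φ') :
    comp ψ φ ≤ comp ψ' φ' :=
  fun x z => iSup_mono fun y => mul_le_mul_of_residuated hres (hψ y z) (hφ x y)

theorem le_star_iff (hres : ∀ p q r : Q, p * q ≤ r ↔ p ≤ himp q r) {X Y : Type*}
    {ζ : X → Y → Q} {ψ : Y → X → Q} : ψ ≤ star himp ζ ↔ comp ζ ψ ≤ QR.id Y := by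
  simp only [Pi.le_def, star, comp, le_iInf_iff, iSup_le_iff, ← hres, mul_comm (ζ _ _)]
  exact forall_congr' fun y => forall_comm

theorem comp_star_le_id (hres : ∀ p q r : Q, p * q ≤ r ↔ p ≤ himp q r) {X Y : Type*}
    (ζ : X → Y → Q) : comp ζ (star himp ζ) ≤ QR.id Y :=
  (le_star_iff hres).1 le_rfl

/-- The relation `ζ_Σ(x, S) = S x` of a `Q`-partition `Σ` of `X`, with `Y` indexing `Σ`. -/
structure IsPartition {X Y : Type*} (ζ : X → Y → Q) : Prop where
  disjoint : ∀ x y y', y ≠ y' → ζ x y * ζ x y' = ⊥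
  iSup_right : ∀ x, ⨆ y, ζ x y = 1
  iSup_left : ∀ y, ⨆ x, ζ x y = 1

namespace IsPartition

variable {X Y : Type*} {ζ : X → Y → Q}

theorem mul_self (hres : ∀ p q r : Q, p * q ≤ r ↔ p ≤ himp q r) (hζ : IsPartition ζ)
    (x : X) (y : Y) : ζ x y * ζ x y = ζ x y := by
  have hsup : ⨆ y', ζ x y * ζ x y' = ζ x y * ζ x y := by
    refine le_antisymm (iSup_le fun y' => ?_) (le_iSup (fun y' => ζ x y * ζ x y') y)
    rcases eq_or_ne y y' with rfl | hne
    · exact le_rfl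
    · exact (hζ.disjoint x y y' hne).trans_le bot_le
  rw [← hsup, ← mul_iSup_of_residuated hres, hζ.iSup_right, mul_one]

theorem comp_op_eq_id (hres : ∀ p q r : Q, p * q ≤ r ↔ p ≤ himp q r) (hζ : IsPartition ζ) :
    comp ζ (fun y x => ζ x y) = QR.id Y := by
  funext y y'
  rcases eq_or_ne y y' with rfl | hne
  · simp only [comp, QR.id, ↓reduceIte, hζ.mul_self hres, hζ.iSup_left]
  · simp only [comp, QR.id, if_neg hne, hζ.disjoint _ _ _ hne.symm, iSup_bot]

theorem id_le_op_comp (hres : ∀ p q r : Q, p * q ≤ r ↔ p ≤ himp q r) (hζ : IsPartition ζ) :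
    QR.id X ≤ comp (fun y x => ζ x y) ζ := by
  intro x x'
  rcases eq_or_ne x x' with rfl | hne
  · simp only [comp, QR.id, ↓reduceIte, hζ.mul_self hres, hζ.iSup_right, le_refl]
  · simp only [QR.id, if_neg hne, bot_le]

theorem op_le_star (hres : ∀ p q r : Q, p * q ≤ r ↔ p ≤ himp q r) (hζ : IsPartition ζ) :
    (fun y x => ζ x y) ≤ star himp ζ :=
  (le_star_iff hres).2 (hζ.comp_op_eq_id hres).le

theorem isMap (hres : ∀ p q r : Q, p * q ≤ r ↔ p ≤ himp q r) (hζ : IsPartition ζ) :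
    IsMap himp ζ :=
  ⟨(hζ.id_le_op_comp hres).trans (comp_mono hres (hζ.op_le_star hres) le_rfl),
    comp_star_le_id hres ζ⟩

theorem comp_star_eq_id (hres : ∀ p q r : Q, p * q ≤ r ↔ p ≤ himp q r) (hζ : IsPartition ζ) :
    comp ζ (star himp ζ) = QR.id Y :=
  (comp_star_le_id hres ζ).antisymm <| (hζ.comp_op_eq_id hres).ge.trans <|
    comp_mono hres le_rfl (hζ.op_le_star hres)

end IsPartition

end QR

theorem stmt13_general {Q : Type*} [CompleteLattice Q] [CommMonoid Q]
    (himp : Q → Q → Q)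
    (hres : ∀ p q r : Q, p * q ≤ r ↔ p ≤ himp q r)
    {X : Type*} (P : Set (X → Q))
    (hdisj : ∀ (x : X), ∀ S ∈ P, ∀ T ∈ P, S ≠ T → S x * T x = ⊥)
    (hsupS : ∀ x : X, (⨆ S : ↥P, (S : X → Q) x) = 1)
    (hsupx : ∀ S ∈ P, (⨆ x : X, S x) = 1)
    (ζ : X → ↥P → Q) (hζ : ∀ (x : X) (S : ↥P), ζ x S = (S : X → Q) x) :
    QR.IsMap himp ζ ∧
    QR.comp ζ (QR.star himp ζ) = QR.id ↥P ∧
    (∀ x x' : X, QR.id X x x' ≤ QR.comp (fun (S : ↥P) (x : X) => ζ x S) ζ x x') ∧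
    (∀ S T : ↥P, QR.comp ζ (fun (S : ↥P) (x : X) => ζ x S) S T ≤ QR.id ↥P S T) ∧
    QR.comp ζ (fun (S : ↥P) (x : X) => ζ x S) = QR.id ↥P := by
  have hpart : QR.IsPartition ζ := by
    refine ⟨fun x S T hne => ?_, fun x => ?_, fun S => ?_⟩
    · simpa only [hζ] using hdisj x S S.2 T T.2 (Subtype.coe_ne_coe.2 hne)
    · simpa only [hζ] using hsupS x
    · simpa only [hζ] using hsupx S S.2
  exact ⟨hpart.isMap hres, hpart.comp_star_eq_id hres, hpart.id_le_op_comp hres,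
    (hpart.comp_op_eq_id hres).le, hpart.comp_op_eq_id hres⟩

/-- for a `Q`-partition `P` of `X`, the `Q`-relation
`ζ_P (x, S) = S x` is a surjective `Q`-map; in fact `ζ_P ⊣ ζ_P^op` and
`ζ_P ∘ ζ_P^op = id_P`. -/
theorem stmt13 {Q : Type*} [CompleteLattice Q] [CommMonoid Q]
    (hbot : (⊥ : Q) < 1)
    (hdist : ∀ (p : Q) (s : Set Q), p * sSup s = ⨆ q ∈ s, p * q)
    (himp : Q → Q → Q)
    (hres : ∀ p q r : Q, p * q ≤ r ↔ p ≤ himp q r)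
    {X : Type*} (P : Set (X → Q))
    (hdisj : ∀ (x : X), ∀ S ∈ P, ∀ T ∈ P, S ≠ T → S x * T x = ⊥)
    (hsupS : ∀ x : X, (⨆ S : ↥P, (S : X → Q) x) = 1)
    (hsupx : ∀ S ∈ P, (⨆ x : X, S x) = 1)
    (ζ : X → ↥P → Q) (hζ : ∀ (x : X) (S : ↥P), ζ x S = (S : X → Q) x) :
    QR.IsMap himp ζ ∧
    QR.comp ζ (QR.star himp ζ) = QR.id ↥P ∧
    (∀ x x' : X, QR.id X x x' ≤ QR.comp (fun (S : ↥P) (x : X) => ζ x S) ζ x x') ∧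
    (∀ S T : ↥P, QR.comp ζ (fun (S : ↥P) (x : X) => ζ x S) S T ≤ QR.id ↥P S T) ∧
    QR.comp ζ (fun (S : ↥P) (x : X) => ζ x S) = QR.id ↥P :=
  stmt13_general himp hres P hdisj hsupS hsupx ζ hζ
end
end
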